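/- Let P be a set of point trajectories satisfying the pseudo-algebraic and general position assumptions, and let (pq, r, I) be a Delaunay crossing for P. Then each of the edges pr and rq is Delaunay with respect to P at every time t ∈ I. -/

import Mathlib

/-!
Kinetic Delaunay triangulations of points moving in the plane:
common definitions (trajectories, Delaunay edges, co-circularity and
collinearity events, general position assumptions, Delaunay crossings).
-/

noncomputable section

attribute [local instance] Classical.propDecidable

/-- The Euclidean plane. -/
abbrev Plane : Type := EuclideanSpace ℝ (Fin 2)

/-- A point trajectory: a moving point in the plane, parametrized by time. -/
abbrev Traj : Type := ℝ → Plane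

/-- Signed orientation of `x` with respect to the line through `a` and `b`,
oriented from `a` to `b`; positive iff `x` lies in the open left halfplane `L⁻`. -/
def orient (a b x : Plane) : ℝ :=
  (b 0 - a 0) * (x 1 - a 1) - (b 1 - a 1) * (x 0 - a 0)

/-- `x` lies in the open left halfplane `L⁻` of the line oriented from `a` to `b`. -/
def leftOf (a b x : Plane) : Prop := 0 < orient a b x

/-- `x` lies in the open right halfplane `L⁺` of the line oriented from `a` to `b`. -/
def rightOf (a b x : Plane) : Prop := orient a b x < 0

/-- `x` and `y` lie strictly on opposite sides of the line through `a` and `b`. -/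
def OppositeSides (a b x y : Plane) : Prop := orient a b x * orient a b y < 0

/-- Four points of the plane are concyclic. -/
def Concyclic4 (a b c d : Plane) : Prop :=
  ∃ (o : Plane) (ρ : ℝ), 0 < ρ ∧
    dist a o = ρ ∧ dist b o = ρ ∧ dist c o = ρ ∧ dist d o = ρ

/-- Five points of the plane are concyclic. -/
def Concyclic5 (a b c d e : Plane) : Prop :=
  ∃ (o : Plane) (ρ : ℝ), 0 < ρ ∧
    dist a o = ρ ∧ dist b o = ρ ∧ dist c o = ρ ∧ dist d o = ρ ∧ dist e o = ρ

/-- `x` lies in the open circumdisc of `a`, `b`, `c` (for non-collinear `a`, `b`, `c`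
the circle through them is unique, so this is the usual notion). -/
def InCircumdisc (a b c x : Plane) : Prop :=
  ∃ (o : Plane) (ρ : ℝ), dist a o = ρ ∧ dist b o = ρ ∧ dist c o = ρ ∧ dist x o < ρ

/-- `x` lies strictly outside the circumdisc of `a`, `b`, `c`. -/
def OutCircumdisc (a b c x : Plane) : Prop :=
  ∃ (o : Plane) (ρ : ℝ), dist a o = ρ ∧ dist b o = ρ ∧ dist c o = ρ ∧ ρ < dist x o

/-- The edge `pq` is Delaunay at time `t` with respect to the set `Q` of trajectories:
there is a closed disc whose boundary circle passes through `p t` and `q t` and whose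
interior contains no point of `Q` at time `t`. -/
def DelaunayEdge (Q : Finset Traj) (p q : Traj) (t : ℝ) : Prop :=
  ∃ (o : Plane) (ρ : ℝ), dist (p t) o = ρ ∧ dist (q t) o = ρ ∧
    ∀ x ∈ Q, ¬ dist (x t) o < ρ

/-- The four moving points `p, q, a, b` are concyclic at time `t`
(a co-circularity event). -/
def CocircAt (p q a b : Traj) (t : ℝ) : Prop :=
  Concyclic4 (p t) (q t) (a t) (b t)

/-- The three moving points `p, q, r` are collinear at time `t`
(a collinearity event). -/
def CollinAt (p q r : Traj) (t : ℝ) : Prop :=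
  Collinear ℝ ({p t, q t, r t} : Set Plane)

/-- Pairwise distinctness of four trajectories. -/
def Distinct4 (p q a b : Traj) : Prop :=
  p ≠ q ∧ p ≠ a ∧ p ≠ b ∧ q ≠ a ∧ q ≠ b ∧ a ≠ b

/-- Pairwise distinctness of three trajectories. -/
def Distinct3 (p q r : Traj) : Prop := p ≠ q ∧ p ≠ r ∧ q ≠ r

/-- The Delaunayhood of the edge `xy` is violated by the pair `u`, `v` at time `t`:
`u t` and `v t` lie strictly on opposite sides of the line through `x t` and `y t`,
and `v t` lies in the open circumdisc of `x t`, `y t`, `u t`. -/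
def ViolatedBy (x y u v : Traj) (t : ℝ) : Prop :=
  OppositeSides (x t) (y t) (u t) (v t) ∧ InCircumdisc (x t) (y t) (u t) (v t)

/-- General position assumptions on a finite set of moving points: the motions are
continuous, no two points ever coincide, no five points are ever concyclic, no four
are ever collinear, no two co-circularity or collinearity events occur simultaneously
and, at each such event, the involved point crosses the relevant circle or line
transversally. -/
structure GenPos (P : Finset Traj) : Prop where
  cont : ∀ p ∈ P, Continuous p
  never_coincide : ∀ p ∈ P, ∀ q ∈ P, p ≠ q → ∀ t : ℝ, p t ≠ q t
  no_five_cocirc : ∀ t : ℝ, ∀ p ∈ P, ∀ q ∈ P, ∀ a ∈ P, ∀ b ∈ P, ∀ e ∈ P,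
    Distinct4 p q a b → p ≠ e → q ≠ e → a ≠ e → b ≠ e →
    ¬ Concyclic5 (p t) (q t) (a t) (b t) (e t)
  no_four_collin : ∀ t : ℝ, ∀ p ∈ P, ∀ q ∈ P, ∀ a ∈ P, ∀ b ∈ P,
    Distinct4 p q a b → ¬ Collinear ℝ ({p t, q t, a t, b t} : Set Plane)
  unique_cocirc : ∀ t : ℝ, ∀ p ∈ P, ∀ q ∈ P, ∀ a ∈ P, ∀ b ∈ P,
    ∀ p' ∈ P, ∀ q' ∈ P, ∀ a' ∈ P, ∀ b' ∈ P,
    Distinct4 p q a b → Distinct4 p' q' a' b' →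
    CocircAt p q a b t → CocircAt p' q' a' b' t →
    ({p, q, a, b} : Set Traj) = ({p', q', a', b'} : Set Traj)
  unique_collin : ∀ t : ℝ, ∀ p ∈ P, ∀ q ∈ P, ∀ r ∈ P, ∀ p' ∈ P, ∀ q' ∈ P, ∀ r' ∈ P,
    Distinct3 p q r → Distinct3 p' q' r' →
    CollinAt p q r t → CollinAt p' q' r' t →
    ({p, q, r} : Set Traj) = ({p', q', r'} : Set Traj)
  cocirc_collin_separate : ∀ t : ℝ, ∀ p ∈ P, ∀ q ∈ P, ∀ a ∈ P, ∀ b ∈ P,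
    ∀ p' ∈ P, ∀ q' ∈ P, ∀ r' ∈ P,
    Distinct4 p q a b → Distinct3 p' q' r' →
    CocircAt p q a b t → ¬ CollinAt p' q' r' t
  circle_transversal : ∀ p ∈ P, ∀ q ∈ P, ∀ a ∈ P, ∀ b ∈ P, Distinct4 p q a b →
    ∀ t : ℝ, CocircAt p q a b t →
    ∃ δ > (0 : ℝ),
      ((∀ u ∈ Set.Ioo (t - δ) t, InCircumdisc (p u) (q u) (a u) (b u)) ∧
        (∀ u ∈ Set.Ioo t (t + δ), OutCircumdisc (p u) (q u) (a u) (b u))) ∨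
      ((∀ u ∈ Set.Ioo (t - δ) t, OutCircumdisc (p u) (q u) (a u) (b u)) ∧
        (∀ u ∈ Set.Ioo t (t + δ), InCircumdisc (p u) (q u) (a u) (b u)))
  line_transversal : ∀ p ∈ P, ∀ q ∈ P, ∀ r ∈ P, Distinct3 p q r →
    ∀ t : ℝ, CollinAt p q r t →
    ∃ δ > (0 : ℝ),
      ((∀ u ∈ Set.Ioo (t - δ) t, leftOf (p u) (q u) (r u)) ∧
        (∀ u ∈ Set.Ioo t (t + δ), rightOf (p u) (q u) (r u))) ∨
      ((∀ u ∈ Set.Ioo (t - δ) t, rightOf (p u) (q u) (r u)) ∧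
        (∀ u ∈ Set.Ioo t (t + δ), leftOf (p u) (q u) (r u)))

/-- Pseudo-algebraicity: any four points of `P` are concyclic at most `s` times. -/
def CocircBound (P : Finset Traj) (s : ℕ) : Prop :=
  ∀ p ∈ P, ∀ q ∈ P, ∀ a ∈ P, ∀ b ∈ P, Distinct4 p q a b →
    {t : ℝ | CocircAt p q a b t}.encard ≤ (s : ℕ∞)

/-- Pseudo-algebraicity: any three points of `P` are collinear at most `c` times. -/
def CollinBound (P : Finset Traj) (c : ℕ) : Prop :=
  ∀ p ∈ P, ∀ q ∈ P, ∀ r ∈ P, Distinct3 p q r →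
    {t : ℝ | CollinAt p q r t}.encard ≤ (c : ℕ∞)

/-- A Delaunay co-circularity event of `P` occurs at time `t`: some four (distinct)
points of `P` are concyclic at time `t`, and the open disc bounded by their common
circle contains no point of `P` at time `t`. -/
def DelaunayCocircAt (P : Finset Traj) (t : ℝ) : Prop :=
  ∃ p ∈ P, ∃ q ∈ P, ∃ a ∈ P, ∃ b ∈ P, Distinct4 p q a b ∧
    ∃ (o : Plane) (ρ : ℝ), 0 < ρ ∧
      dist (p t) o = ρ ∧ dist (q t) o = ρ ∧ dist (a t) o = ρ ∧ dist (b t) o = ρ ∧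
      ∀ x ∈ P, ¬ dist (x t) o < ρ

/-- A `k`-shallow co-circularity of `p, q, a, b` at time `t`: the four points are
concyclic and the open disc bounded by their common circle contains at most `k`
points of `P` at time `t`. -/
def ShallowCocircAt (P : Finset Traj) (k : ℕ) (p q a b : Traj) (t : ℝ) : Prop :=
  ∃ (o : Plane) (ρ : ℝ), 0 < ρ ∧
    dist (p t) o = ρ ∧ dist (q t) o = ρ ∧ dist (a t) o = ρ ∧ dist (b t) o = ρ ∧
    {x : Traj | x ∈ P ∧ dist (x t) o < ρ}.ncard ≤ k

/-- A `k`-shallow collinearity of `p, q, r` at time `t`: the three points are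
collinear and one of the two open halfplanes bounded by the line through them
contains at most `k` points of `P` at time `t`. -/
def ShallowCollinAt (P : Finset Traj) (k : ℕ) (p q r : Traj) (t : ℝ) : Prop :=
  CollinAt p q r t ∧ p t ≠ q t ∧
    ({x : Traj | x ∈ P ∧ leftOf (p t) (q t) (x t)}.ncard ≤ k ∨
      {x : Traj | x ∈ P ∧ rightOf (p t) (q t) (x t)}.ncard ≤ k)

/-- At time `t`, the point `r` lies on the segment `pq` and crosses it transversally
from the open halfplane `L⁻` (left of the oriented line `pq`) to `L⁺`. -/
def CrossesMinusPlus (p q r : Traj) (t : ℝ) : Prop :=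
  r t ∈ segment ℝ (p t) (q t) ∧
    ∃ δ > (0 : ℝ),
      (∀ u ∈ Set.Ioo (t - δ) t, leftOf (p u) (q u) (r u)) ∧
      (∀ u ∈ Set.Ioo t (t + δ), rightOf (p u) (q u) (r u))

/-- At time `t`, the point `r` lies on the segment `pq` and crosses it transversally
from `L⁺` to `L⁻`. -/
def CrossesPlusMinus (p q r : Traj) (t : ℝ) : Prop :=
  r t ∈ segment ℝ (p t) (q t) ∧
    ∃ δ > (0 : ℝ),
      (∀ u ∈ Set.Ioo (t - δ) t, rightOf (p u) (q u) (r u)) ∧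
      (∀ u ∈ Set.Ioo t (t + δ), leftOf (p u) (q u) (r u))

/-- A Delaunay crossing `(pq, r, [t₀, t₁])`: the edge `pq` is Delaunay with respect
to `P` at times `t₀` and `t₁` but at no time in `(t₀, t₁)`; `r` lies on the closed
segment `pq` at least once during `[t₀, t₁]`; and `pq` is Delaunay with respect to
`P ∖ {r}` throughout `[t₀, t₁]`. -/
structure DelaunayCrossing (P : Finset Traj) (p q r : Traj) (t₀ t₁ : ℝ) : Prop where
  lt : t₀ < t₁
  mem_p : p ∈ P
  mem_q : q ∈ P
  mem_r : r ∈ P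
  distinct : Distinct3 p q r
  del_start : DelaunayEdge P p q t₀
  del_end : DelaunayEdge P p q t₁
  not_del : ∀ t ∈ Set.Ioo t₀ t₁, ¬ DelaunayEdge P p q t
  hits : ∃ t ∈ Set.Icc t₀ t₁, r t ∈ segment ℝ (p t) (q t)
  del_erase : ∀ t ∈ Set.Icc t₀ t₁, DelaunayEdge (P.erase r) p q t

/-- A single Delaunay crossing, with the convention that `r` crosses the segment
`pq` from `L⁻` to `L⁺`: a Delaunay crossing in which `r` lies on the segment `pq`
at exactly one time of `[t₀, t₁]`, where it crosses from `L⁻` to `L⁺`.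
(It is a clockwise `(p, r)`-crossing and a counterclockwise `(q, r)`-crossing.) -/
structure SingleCrossing (P : Finset Traj) (p q r : Traj) (t₀ t₁ : ℝ) : Prop where
  crossing : DelaunayCrossing P p q r t₀ t₁
  unique_hit : ∀ t ∈ Set.Icc t₀ t₁, ∀ t' ∈ Set.Icc t₀ t₁,
    r t ∈ segment ℝ (p t) (q t) → r t' ∈ segment ℝ (p t') (q t') → t = t'
  dir : ∀ t ∈ Set.Icc t₀ t₁, r t ∈ segment ℝ (p t) (q t) → CrossesMinusPlus p q r t

/-- A double Delaunay crossing: a Delaunay crossing in which `r` lies on the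
segment `pq` at exactly two times of `[t₀, t₁]`. -/
structure DoubleCrossing (P : Finset Traj) (p q r : Traj) (t₀ t₁ : ℝ) : Prop where
  crossing : DelaunayCrossing P p q r t₀ t₁
  two_hits : ∃ u v : ℝ, u ∈ Set.Icc t₀ t₁ ∧ v ∈ Set.Icc t₀ t₁ ∧ u ≠ v ∧
    r u ∈ segment ℝ (p u) (q u) ∧ r v ∈ segment ℝ (p v) (q v) ∧
    ∀ t ∈ Set.Icc t₀ t₁, r t ∈ segment ℝ (p t) (q t) → t = u ∨ t = v

/-- The point `s` enters the cap `B[p,q,r] ∩ L⁺_pq` at time `t`: just before `t` it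
lies strictly outside the circumdisc `B[p,q,r]`, and just after `t` it lies inside
`B[p,q,r]` and in the open right halfplane `L⁺` of the oriented line `pq`. -/
def EntersCapPlus (p q r s : Traj) (t : ℝ) : Prop :=
  ∃ δ > (0 : ℝ),
    (∀ u ∈ Set.Ioo (t - δ) t, OutCircumdisc (p u) (q u) (r u) (s u)) ∧
    (∀ u ∈ Set.Ioo t (t + δ),
      InCircumdisc (p u) (q u) (r u) (s u) ∧ rightOf (p u) (q u) (s u))

/-- The point `s` leaves the cap `B[p,q,r] ∩ L⁻_pq` at time `t`: just before `t` it
lies inside the circumdisc `B[p,q,r]` and in the open left halfplane `L⁻` of the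
oriented line `pq`, and just after `t` it lies strictly outside `B[p,q,r]`. -/
def LeavesCapMinus (p q r s : Traj) (t : ℝ) : Prop :=
  ∃ δ > (0 : ℝ),
    (∀ u ∈ Set.Ioo (t - δ) t,
      InCircumdisc (p u) (q u) (r u) (s u) ∧ leftOf (p u) (q u) (s u)) ∧
    (∀ u ∈ Set.Ioo t (t + δ), OutCircumdisc (p u) (q u) (r u) (s u))

/-!
For `t ∈ (t₀, t₁)`, a disc through `p, q` with no point of `P ∖ {r}` inside must contain `r`,
since otherwise `pq` would be Delaunay for `P`. Shrinking such a disc by homotheties centred at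
`p` and at `q` until `r` reaches the boundary gives empty discs through `p, r` and `r, q`.

At an endpoint `τ` the disc is obtained as a limit of such discs. Parametrise the circles through
`p` and `q` by the position `h` of their centre on the bisector. As `pq` is Delaunay for
`P ∖ {r}` at time `τ`, no other point lies on the closed segment `pq`; hence for `u` near `τ` the
parameter can be clamped to a fixed interval `[-K, K]` without letting a point into the disc, and
compactness of `[-K, K]` yields a covering disc at time `τ`.
-/

open Filter Topology Metric Set

section StrictConvexSpace

variable {E : Type*} [NormedAddCommGroup E] [NormedSpace ℝ E] [StrictConvexSpace ℝ E]

theorem dist_lt_of_mem_segment_of_ne {a b x o : E} {ρ : ℝ} (hx : x ∈ segment ℝ a b)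
    (hxa : x ≠ a) (hxb : x ≠ b) (ha : dist a o = ρ) (hb : dist b o = ρ) : dist x o < ρ := by
  have hab : a ≠ b := by
    rintro rfl
    rw [segment_same] at hx
    exact hxa hx
  exact openSegment_subset_ball_of_ne (mem_closedBall.2 ha.le) (mem_closedBall.2 hb.le) hab
    (mem_openSegment_of_ne_left_right hxa.symm hxb.symm hx)

end StrictConvexSpace

section InnerProductSpace

variable {E : Type*} [NormedAddCommGroup E] [InnerProductSpace ℝ E]

/-- The new disc is the image of the old one under a homothety centred at `a`, with ratio chosen
so that its boundary passes through `b`. -/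
theorem exists_ball_subset_of_dist_le {a b o : E} {ρ : ℝ} (hab : a ≠ b)
    (ha : dist a o = ρ) (hb : dist b o ≤ ρ) :
    ∃ o' ρ', dist a o' = ρ' ∧ dist b o' = ρ' ∧ ball o' ρ' ⊆ ball o ρ := by
  set ip := inner ℝ (b - a) (o - a)
  have hba : 0 < ‖b - a‖ := norm_pos_iff.2 (sub_ne_zero.2 hab.symm)
  have hoa : ‖o - a‖ = ρ := by rw [← dist_eq_norm, dist_comm, ha]
  have hbo : ‖b - o‖ ≤ ρ := by rwa [← dist_eq_norm]
  have hkey : ‖b - a‖ ^ 2 ≤ 2 * ip := by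
    have h := norm_sub_sq_real (b - a) (o - a)
    rw [show b - a - (o - a) = b - o by abel, hoa] at h
    nlinarith [norm_nonneg (b - o)]
  have hip : 0 < ip := by nlinarith
  set s := ‖b - a‖ ^ 2 / (2 * ip)
  have hs0 : 0 < s := by positivity
  have hs1 : s ≤ 1 := (div_le_one (by positivity)).2 hkey
  have hρ : 0 ≤ ρ := ha ▸ dist_nonneg
  refine ⟨a + s • (o - a), s * ρ, ?_, ?_, ball_subset_ball' ?_⟩
  · rw [dist_eq_norm, sub_add_cancel_left, norm_neg, norm_smul, Real.norm_of_nonneg hs0.le,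
      ← dist_eq_norm, dist_comm, ha]
  · rw [dist_eq_norm, show b - (a + s • (o - a)) = (b - a) - s • (o - a) by abel]
    have h := norm_sub_sq_real (b - a) (s • (o - a))
    rw [inner_smul_right, norm_smul, Real.norm_of_nonneg hs0.le, hoa] at h
    have hsip : s * (2 * ip) = ‖b - a‖ ^ 2 := div_mul_cancel₀ _ (by positivity)
    refine (sq_eq_sq₀ (norm_nonneg _) (by positivity)).1 ?_
    rw [h]; nlinarith
  · rw [dist_eq_norm, show a + s • (o - a) - o = (1 - s) • (a - o) by
      rw [sub_smul, one_smul, smul_sub, smul_sub]; abel, norm_smul,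
      Real.norm_of_nonneg (by linarith), ← dist_eq_norm, ha]
    nlinarith

end InnerProductSpace

theorem sub_mul_clamp_nonneg {α β h K : ℝ} (hK : 0 ≤ K) (hh : 0 ≤ α - β * h)
    (hguard : 0 < α - β * K ∨ 0 < α - β * -K) : 0 ≤ α - β * max (-K) (min K h) := by
  rcases le_total h (-K) with h1 | h1
  · rw [max_eq_left (min_le_of_right_le h1)]
    rcases le_total 0 β with hβ | hβ <;> rcases hguard with hg | hg <;> nlinarith
  rcases le_total h K with h2 | h2
  · rw [min_eq_right h2, max_eq_right h1]
    exact hh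
  · rw [min_eq_left h2, max_eq_right (by linarith)]
    rcases le_total 0 β with hβ | hβ <;> rcases hguard with hg | hg <;> nlinarith

section Pencil

theorem Plane.ext_of_coord {x y : Plane} (h0 : x 0 = y 0) (h1 : x 1 = y 1) : x = y := by
  ext i
  fin_cases i
  exacts [h0, h1]

theorem dist_sq_eq_coord (x y : Plane) : dist x y ^ 2 = (x 0 - y 0) ^ 2 + (x 1 - y 1) ^ 2 := by
  simp [EuclideanSpace.dist_sq_eq, Fin.sum_univ_two, Real.dist_eq, sq_abs]

theorem midpoint_apply (a b : Plane) (i : Fin 2) : midpoint ℝ a b i = (a i + b i) / 2 := by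
  simp only [midpoint_eq_smul_add, invOf_eq_inv, smul_add, PiLp.add_apply, PiLp.smul_apply,
    smul_eq_mul]
  ring

/-- The point `midpoint a b + h • J (b - a)`, with `J` the rotation by a right angle: as `h`
ranges over `ℝ` this runs through the centres of all circles through `a` and `b`. -/
def pencilCenter (a b : Plane) (h : ℝ) : Plane :=
  !₂[(a 0 + b 0) / 2 - h * (b 1 - a 1), (a 1 + b 1) / 2 + h * (b 0 - a 0)]

theorem pencilCenter_apply_zero (a b : Plane) (h : ℝ) :
    pencilCenter a b h 0 = (a 0 + b 0) / 2 - h * (b 1 - a 1) := rfl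

theorem pencilCenter_apply_one (a b : Plane) (h : ℝ) :
    pencilCenter a b h 1 = (a 1 + b 1) / 2 + h * (b 0 - a 0) := rfl

/-- `dist x c ^ 2 - dist a c ^ 2` for `c = pencilCenter a b h` (see `pencilPower_eq`), written
so that it is visibly affine in `h`. -/
def pencilPower (a b x : Plane) (h : ℝ) : ℝ :=
  dist x (midpoint ℝ a b) ^ 2 - dist a (midpoint ℝ a b) ^ 2 - 2 * orient a b x * h

theorem pencilPower_eq (a b x : Plane) (h : ℝ) :
    pencilPower a b x h = dist x (pencilCenter a b h) ^ 2 - dist a (pencilCenter a b h) ^ 2 := by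
  simp only [pencilPower, dist_sq_eq_coord, midpoint_apply, orient, pencilCenter_apply_zero,
    pencilCenter_apply_one]
  ring

theorem dist_left_pencilCenter (a b : Plane) (h : ℝ) :
    dist a (pencilCenter a b h) = dist b (pencilCenter a b h) := by
  rw [← sq_eq_sq₀ dist_nonneg dist_nonneg, dist_sq_eq_coord, dist_sq_eq_coord,
    pencilCenter_apply_zero, pencilCenter_apply_one]
  ring

@[simp] theorem pencilPower_left (a b : Plane) (h : ℝ) : pencilPower a b a h = 0 := by
  simp [pencilPower, orient]

@[simp] theorem pencilPower_right (a b : Plane) (h : ℝ) : pencilPower a b b h = 0 := by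
  simp only [pencilPower, orient, dist_left_midpoint, dist_right_midpoint]
  ring

theorem exists_eq_pencilCenter {a b o : Plane} (hab : a ≠ b) (ho : dist a o = dist b o) :
    ∃ h, o = pencilCenter a b h := by
  have hn : (b 0 - a 0) ^ 2 + (b 1 - a 1) ^ 2 ≠ 0 := by
    rw [← dist_sq_eq_coord]
    exact pow_ne_zero 2 (dist_ne_zero.2 hab.symm)
  have hperp :
      (b 0 - a 0) * (o 0 - (a 0 + b 0) / 2) + (b 1 - a 1) * (o 1 - (a 1 + b 1) / 2) = 0 := by
    have h := congrArg (· ^ 2) ho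
    simp only [dist_sq_eq_coord] at h
    linear_combination h / 2
  refine ⟨((b 0 - a 0) * (o 1 - (a 1 + b 1) / 2) - (b 1 - a 1) * (o 0 - (a 0 + b 0) / 2))
      / ((b 0 - a 0) ^ 2 + (b 1 - a 1) ^ 2), ?_⟩
  refine Plane.ext_of_coord ?_ ?_
  · rw [pencilCenter_apply_zero]
    field_simp
    linear_combination (2 * (b 0 - a 0)) * hperp
  · rw [pencilCenter_apply_one]
    field_simp
    linear_combination (2 * (b 1 - a 1)) * hperp

theorem mem_segment_of_pencilPower_nonpos {a b x : Plane} (hab : a ≠ b)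
    (hx : pencilPower a b x 0 ≤ 0) (hcol : orient a b x = 0) : x ∈ segment ℝ a b := by
  have hn : 0 < (b 0 - a 0) ^ 2 + (b 1 - a 1) ^ 2 := by
    rw [← dist_sq_eq_coord]
    exact pow_pos (dist_pos.2 hab.symm) 2
  set c := ((b 0 - a 0) * (x 0 - (a 0 + b 0) / 2) + (b 1 - a 1) * (x 1 - (a 1 + b 1) / 2))
      / ((b 0 - a 0) ^ 2 + (b 1 - a 1) ^ 2)
  unfold orient at hcol
  have hx0 : x 0 - (a 0 + b 0) / 2 = c * (b 0 - a 0) := by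
    rw [div_mul_eq_mul_div, eq_div_iff hn.ne']
    linear_combination (-(b 1 - a 1)) * hcol
  have hx1 : x 1 - (a 1 + b 1) / 2 = c * (b 1 - a 1) := by
    rw [div_mul_eq_mul_div, eq_div_iff hn.ne']
    linear_combination (b 0 - a 0) * hcol
  have hc : c ^ 2 ≤ 1 / 4 := by
    simp only [pencilPower, dist_sq_eq_coord, midpoint_apply, mul_zero, sub_zero] at hx
    rw [hx0, hx1] at hx
    nlinarith
  refine ⟨1 / 2 - c, 1 / 2 + c, by nlinarith, by nlinarith, by ring, ?_⟩
  refine Plane.ext_of_coord ?_ ?_ <;> simp only [PiLp.add_apply, PiLp.smul_apply, smul_eq_mul]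
  · linear_combination -hx0
  · linear_combination -hx1

theorem Continuous.pencilPower {X : Type*} [TopologicalSpace X] {a b x : X → Plane}
    {h : X → ℝ} (ha : Continuous a) (hb : Continuous b) (hx : Continuous x)
    (hh : Continuous h) : Continuous fun z => pencilPower (a z) (b z) (x z) (h z) := by
  simp only [_root_.pencilPower, orient, midpoint_eq_smul_add]
  fun_prop

theorem pencilPower_pos_iff {a b x : Plane} {h : ℝ} :
    0 < pencilPower a b x h ↔ dist a (pencilCenter a b h) < dist x (pencilCenter a b h) := by
  rw [pencilPower_eq, sub_pos, sq_lt_sq₀ dist_nonneg dist_nonneg]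

theorem pencilPower_nonneg_iff {a b x : Plane} {h : ℝ} :
    0 ≤ pencilPower a b x h ↔ dist a (pencilCenter a b h) ≤ dist x (pencilCenter a b h) := by
  rw [pencilPower_eq, sub_nonneg, sq_le_sq₀ dist_nonneg dist_nonneg]

theorem eventually_atTop_pencilPower_pos {a b x : Plane} (hab : a ≠ b)
    (hx : x ∉ segment ℝ a b) :
    ∀ᶠ K in atTop, 0 < pencilPower a b x K ∨ 0 < pencilPower a b x (-K) := by
  have hlin : ∀ K, pencilPower a b x K = pencilPower a b x 0 - 2 * orient a b x * K := by
    simp [pencilPower]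
  by_cases hcol : orient a b x = 0
  · have h0 : 0 < pencilPower a b x 0 :=
      not_le.1 fun h0 => hx (mem_segment_of_pencilPower_nonpos hab h0 hcol)
    exact Eventually.of_forall fun K => Or.inl (by rw [hlin, hcol]; simpa using h0)
  · filter_upwards [eventually_ge_atTop ((|pencilPower a b x 0| + 1) / |2 * orient a b x|)]
      with K hK
    rw [div_le_iff₀ (by positivity)] at hK
    have hα := neg_abs_le (pencilPower a b x 0)
    rw [hlin, hlin (-K)]
    rcases abs_cases (2 * orient a b x) with ⟨hβ, -⟩ | ⟨hβ, -⟩ <;> rw [hβ] at hK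
    · right; linarith
    · left; linarith

end Pencil

section Kinetic

variable {Q : Finset Traj} {p q r : Traj} {t : ℝ}

theorem DelaunayEdge.symm (hpq : DelaunayEdge Q p q t) : DelaunayEdge Q q p t := by
  obtain ⟨o, ρ, hp, hq, hQ⟩ := hpq
  exact ⟨o, ρ, hq, hp, hQ⟩

theorem DelaunayEdge.notMem_segment (hpq : DelaunayEdge Q p q t) {x : Traj} (hx : x ∈ Q)
    (hxp : x t ≠ p t) (hxq : x t ≠ q t) : x t ∉ segment ℝ (p t) (q t) := by
  obtain ⟨o, ρ, hp, hq, hQ⟩ := hpq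
  exact fun hseg => hQ x hx (dist_lt_of_mem_segment_of_ne hseg hxp hxq hp hq)

theorem delaunayEdge_of_dist_le {o : Plane} {ρ : ℝ} (hp : dist (p t) o = ρ)
    (hr : dist (r t) o ≤ ρ) (hQ : ∀ x ∈ Q.erase r, ¬ dist (x t) o < ρ) (hpr : p t ≠ r t) :
    DelaunayEdge Q p r t := by
  obtain ⟨o', ρ', hp', hr', hball⟩ := exists_ball_subset_of_dist_le hpr hp hr
  refine ⟨o', ρ', hp', hr', fun x hx hlt => ?_⟩
  by_cases hxr : x = r
  · subst hxr
    exact hlt.ne hr'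
  · exact hQ x (Finset.mem_erase.2 ⟨hxr, hx⟩) (hball hlt)

/-- The disc of the pencil through `p t`, `q t` with parameter `h` has no point of `Q ∖ {r}` in
its interior, but contains `r t`. -/
def PencilCover (Q : Finset Traj) (p q r : Traj) (t h : ℝ) : Prop :=
  (∀ x ∈ Q.erase r, 0 ≤ pencilPower (p t) (q t) (x t) h) ∧ pencilPower (p t) (q t) (r t) h ≤ 0

theorem PencilCover.delaunayEdge {h : ℝ} (hcov : PencilCover Q p q r t h) (hpr : p t ≠ r t)
    (hqr : q t ≠ r t) : DelaunayEdge Q p r t ∧ DelaunayEdge Q r q t := by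
  have hr := hcov.2
  rw [← not_lt, pencilPower_pos_iff, not_lt] at hr
  have hQ : ∀ x ∈ Q.erase r, ¬ dist (x t) (pencilCenter (p t) (q t) h) <
      dist (p t) (pencilCenter (p t) (q t) h) := fun x hx =>
    not_lt.2 (pencilPower_nonneg_iff.1 (hcov.1 x hx))
  rw [dist_left_pencilCenter] at hr hQ
  exact ⟨delaunayEdge_of_dist_le (dist_left_pencilCenter _ _ _) hr hQ hpr,
    (delaunayEdge_of_dist_le rfl hr hQ hqr).symm⟩

theorem pencilPower_nonpos_of_not_delaunayEdge {h : ℝ} (hnd : ¬ DelaunayEdge Q p q t)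
    (hQ : ∀ x ∈ Q.erase r, 0 ≤ pencilPower (p t) (q t) (x t) h) :
    pencilPower (p t) (q t) (r t) h ≤ 0 := by
  refine not_lt.1 fun hr => hnd ⟨pencilCenter (p t) (q t) h, _, rfl,
    (dist_left_pencilCenter _ _ _).symm, fun x hx => not_lt.2 ?_⟩
  rw [← pencilPower_nonneg_iff]
  by_cases hxr : x = r
  · exact hxr ▸ hr.le
  · exact hQ x (Finset.mem_erase.2 ⟨hxr, hx⟩)

theorem exists_pencilPower_nonneg_of_delaunayEdge (hpq : p t ≠ q t)
    (hdel : DelaunayEdge Q p q t) : ∃ h, ∀ x ∈ Q, 0 ≤ pencilPower (p t) (q t) (x t) h := by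
  obtain ⟨o, ρ, hp, hq, hQ⟩ := hdel
  obtain ⟨h, rfl⟩ := exists_eq_pencilCenter hpq (hp.trans hq.symm)
  exact ⟨h, fun x hx => pencilPower_nonneg_iff.2 (hp ▸ not_lt.1 (hQ x hx))⟩

theorem exists_pencilCover_mem_Icc {K : ℝ} (hK : 0 ≤ K) (hpq : p t ≠ q t)
    (hdel : DelaunayEdge (Q.erase r) p q t) (hnd : ¬ DelaunayEdge Q p q t)
    (hguard : ∀ x ∈ ((Q.erase r).erase p).erase q,
      0 < pencilPower (p t) (q t) (x t) K ∨ 0 < pencilPower (p t) (q t) (x t) (-K)) :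
    ∃ h ∈ Icc (-K) K, PencilCover Q p q r t h := by
  obtain ⟨h, hh⟩ := exists_pencilPower_nonneg_of_delaunayEdge hpq hdel
  have hQ : ∀ x ∈ Q.erase r, 0 ≤ pencilPower (p t) (q t) (x t) (max (-K) (min K h)) := by
    intro x hx
    by_cases hxp : x = p
    · simp [hxp]
    by_cases hxq : x = q
    · simp [hxq]
    exact sub_mul_clamp_nonneg hK (hh x hx)
      (hguard x (Finset.mem_erase.2 ⟨hxq, Finset.mem_erase.2 ⟨hxp, hx⟩⟩))
  exact ⟨_, ⟨le_max_left _ _, max_le (by linarith) (min_le_left _ _)⟩, hQ,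
    pencilPower_nonpos_of_not_delaunayEdge hnd hQ⟩

theorem isClosed_pencilCover (hcont : ∀ x ∈ Q, Continuous x) (hp : Continuous p)
    (hq : Continuous q) (hr : Continuous r) :
    IsClosed {z : ℝ × ℝ | PencilCover Q p q r z.1 z.2} := by
  have hpow : ∀ {x : Traj}, Continuous x →
      Continuous fun z : ℝ × ℝ => pencilPower (p z.1) (q z.1) (x z.1) z.2 := fun hx =>
    (hp.comp continuous_fst).pencilPower (hq.comp continuous_fst) (hx.comp continuous_fst)
      continuous_snd
  simp only [PencilCover, ofPred_and, ofPred_forall]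
  exact (isClosed_biInter fun x hx =>
    isClosed_le continuous_const (hpow (hcont x (Finset.mem_of_mem_erase hx)))).inter
    (isClosed_le (hpow hr) continuous_const)

theorem exists_eventually_pencilPower_pos {s : Finset Traj} {τ : ℝ}
    (hcont : ∀ x ∈ s, Continuous x) (hp : Continuous p) (hq : Continuous q)
    (hpq : p τ ≠ q τ) (hs : ∀ x ∈ s, x τ ∉ segment ℝ (p τ) (q τ)) :
    ∃ K, 0 ≤ K ∧ ∀ᶠ u in 𝓝 τ, ∀ x ∈ s,
      0 < pencilPower (p u) (q u) (x u) K ∨ 0 < pencilPower (p u) (q u) (x u) (-K) := by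
  have hK : ∀ᶠ K in atTop, ∀ x ∈ s, ∀ᶠ u in 𝓝 τ,
      0 < pencilPower (p u) (q u) (x u) K ∨ 0 < pencilPower (p u) (q u) (x u) (-K) := by
    refine eventually_all_finset s |>.2 fun x hx => ?_
    filter_upwards [eventually_atTop_pencilPower_pos hpq (hs x hx)] with K hK
    have hpow : ∀ k : ℝ, Continuous fun u => pencilPower (p u) (q u) (x u) k := fun k =>
      hp.pencilPower hq (hcont x hx) continuous_const
    rcases hK with hK | hK
    · exact (continuousAt_const.eventually_lt (hpow K).continuousAt hK).mono fun _ => Or.inl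
    · exact (continuousAt_const.eventually_lt (hpow (-K)).continuousAt hK).mono fun _ => Or.inr
  obtain ⟨K, hK, hK0⟩ := (hK.and (eventually_ge_atTop 0)).exists
  exact ⟨K, hK0, eventually_all_finset s |>.2 hK⟩

theorem exists_pencilCover_of_forall_Ioo {t₀ t₁ τ : ℝ} (hcont : ∀ x ∈ Q, Continuous x)
    (hp : p ∈ Q) (hq : q ∈ Q) (hr : r ∈ Q) (hpq : ∀ t, p t ≠ q t) (ht : t₀ < t₁)
    (hτ : τ ∈ Icc t₀ t₁)
    (hI : ∀ u ∈ Ioo t₀ t₁, DelaunayEdge (Q.erase r) p q u ∧ ¬ DelaunayEdge Q p q u)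
    (hseg : ∀ x ∈ ((Q.erase r).erase p).erase q, x τ ∉ segment ℝ (p τ) (q τ)) :
    ∃ h, PencilCover Q p q r τ h := by
  have hsub : ((Q.erase r).erase p).erase q ⊆ Q := fun x hx =>
    Finset.mem_of_mem_erase (Finset.mem_of_mem_erase (Finset.mem_of_mem_erase hx))
  obtain ⟨K, hK, hguard⟩ := exists_eventually_pencilPower_pos (fun x hx => hcont x (hsub hx))
    (hcont p hp) (hcont q hq) (hpq τ) hseg
  set A := {u | ∃ h ∈ Icc (-K) K, PencilCover Q p q r u h}
  have hA : IsClosed A := by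
    have hcov := (isClosed_pencilCover hcont (hcont p hp) (hcont q hq) (hcont r hr)).preimage
      (continuous_fst.prodMk (continuous_subtype_val.comp continuous_snd) :
        Continuous fun z : ℝ × Icc (-K) K => (z.1, (z.2 : ℝ)))
    convert isClosedMap_fst_of_compactSpace _ hcov using 1
    ext u
    simp [A]
  have hev : ∀ᶠ u in 𝓝[Ioo t₀ t₁] τ, u ∈ A := by
    filter_upwards [nhdsWithin_le_nhds hguard, self_mem_nhdsWithin] with u hu hu'
    exact exists_pencilCover_mem_Icc hK (hpq u) (hI u hu').1 (hI u hu').2 hu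
  have : (𝓝[Ioo t₀ t₁] τ).NeBot :=
    mem_closure_iff_nhdsWithin_neBot.1 (by rwa [closure_Ioo ht.ne])
  obtain ⟨h, -, hcov⟩ :=
    hA.closure_subset (mem_closure_of_tendsto (tendsto_id.mono_left nhdsWithin_le_nhds) hev)
  exact ⟨h, hcov⟩

end Kinetic

theorem DelaunayCrossing.exists_pencilCover {P : Finset Traj} {p q r : Traj} {t₀ t₁ t : ℝ}
    (hcross : DelaunayCrossing P p q r t₀ t₁) (hcont : ∀ x ∈ P, Continuous x)
    (hne : ∀ x ∈ P, ∀ y ∈ P, x ≠ y → ∀ t, x t ≠ y t) (ht : t ∈ Icc t₀ t₁) :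
    ∃ h, PencilCover P p q r t h := by
  refine exists_pencilCover_of_forall_Ioo hcont hcross.mem_p hcross.mem_q hcross.mem_r
    (hne p hcross.mem_p q hcross.mem_q hcross.distinct.1) hcross.lt ht
    (fun u hu => ⟨hcross.del_erase u (Ioo_subset_Icc_self hu), hcross.not_del u hu⟩)
    fun x hx => ?_
  simp only [Finset.mem_erase] at hx
  obtain ⟨hxq, hxp, hxr, hxP⟩ := hx
  exact (hcross.del_erase t ht).notMem_segment (Finset.mem_erase.2 ⟨hxr, hxP⟩)
    (hne x hxP p hcross.mem_p hxp t) (hne x hxP q hcross.mem_q hxq t)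

theorem statement3_general (P : Finset Traj) (hP : GenPos P) (p q r : Traj) (t₀ t₁ : ℝ)
    (hcross : DelaunayCrossing P p q r t₀ t₁) :
    ∀ t ∈ Set.Icc t₀ t₁, DelaunayEdge P p r t ∧ DelaunayEdge P r q t := by
  intro t ht
  obtain ⟨h, hcov⟩ := hcross.exists_pencilCover hP.cont hP.never_coincide ht
  obtain ⟨-, hpr, hqr⟩ := hcross.distinct
  exact hcov.delaunayEdge (hP.never_coincide p hcross.mem_p r hcross.mem_r hpr t)
    (hP.never_coincide q hcross.mem_q r hcross.mem_r hqr t)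

/-- (Lemma 4.2 of the paper.) If `(pq, r, [t₀,t₁])` is a Delaunay
crossing for `P`, then each of the edges `pr` and `rq` is Delaunay with respect to
`P` at every time of `[t₀,t₁]`. -/
theorem statement3 (s c : ℕ) (P : Finset Traj)
    (hP : GenPos P) (hs : CocircBound P s) (hc : CollinBound P c)
    (p q r : Traj) (t₀ t₁ : ℝ)
    (hcross : DelaunayCrossing P p q r t₀ t₁) :
    ∀ t ∈ Set.Icc t₀ t₁, DelaunayEdge P p r t ∧ DelaunayEdge P r q t :=
  statement3_general P hP p q r t₀ t₁ hcross
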